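/- arXiv:1711.03515 — 3 statements merged into one kernel-verified Lean document; each statement's English description precedes it below -/
import Mathlib

section
/- Let t, u be positive integers with gcd(t, n) = 1 and u·t ≡ 1 (mod n). Let S = M[x;θ] and S' = M[y;θ^t], and consider the quotient K-algebras 𝒮 = S/S(x^n−1) and 𝒮' = S'/S'(y^n−1) (the polynomials x^n−1 and y^n−1 are central in S and S' respectively). Then the map φ : 𝒮 → 𝒮' determined by φ(a·x^i) = a·y^{iu} (for a ∈ M, 0 ≤ i ≤ n−1) is a well-defined isomorphism of K-algebras, and under the identifications of 𝒮 and 𝒮' with M^n via coefficient vectors of polynomials of degree < n, φ corresponds to the coordinate permutation ρ sending the vector (c_0, …, c_{n−1}) to the vector whose j-th coordinate is c_{jt mod n}. -/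
/-! The quotient algebras `𝒮 = M[x;θ]/(xⁿ-1)` and `𝒮' = M[y;θᵗ]/(yⁿ-1)` are modeled on
coefficient vectors `Fin n → M` of the degree `< n` representatives: multiplication is
`(f * g)ₖ = Σ_{i+j ≡ k (n)} fᵢ · τⁱ(gⱼ)` for the twisting automorphism `τ`. -/

variable {M : Type*} [Field M]

/-- Multiplication of `M[x;τ]/(xⁿ-1)` on coefficient vectors. -/
noncomputable def qMul (τ : M ≃+* M) (n : ℕ) (f g : Fin n → M) : Fin n → M :=
  fun k => ∑ i : Fin n, ∑ j : Fin n,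
    if ((i : ℕ) + (j : ℕ)) % n = (k : ℕ) then f i * (τ ^ (i : ℕ)) (g j) else 0

/-- The multiplicative identity of `M[x;τ]/(xⁿ-1)` as a coefficient vector. -/
noncomputable def qOne (M : Type*) [Field M] (n : ℕ) : Fin n → M :=
  fun k => if (k : ℕ) = 0 then 1 else 0

/-- The map `φ : 𝒮 → 𝒮'` determined by `φ(a·xⁱ) = a·y^{iu}`, on coefficient vectors. -/
noncomputable def qPhi (u : ℕ) {n : ℕ} (c : Fin n → M) : Fin n → M :=
  fun j => ∑ i : Fin n, if (i : ℕ) * u % n = (j : ℕ) then c i else 0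

/-! Since `u·t ≡ 1 (mod n)`, the exponent `i ↦ i·u mod n` is inverted by `j ↦ j·t mod n`, so `φ`
just precomposes coefficient vectors with the permutation `σ : j ↦ j·t mod n` of `ℤ/n`. This `σ`
is additive modulo `n`, and because `θⁿ = 1` it satisfies `θ^{σ(i)} = (θᵗ)ⁱ`; reindexing the
convolution defining the product by `σ` therefore turns the product of `M[x;θ]/(xⁿ-1)` into that
of `M[y;θᵗ]/(yⁿ-1)`. -/

section FinMulMod

variable {n : ℕ} (hn : 0 < n)

def finMulMod (t : ℕ) (j : Fin n) : Fin n := ⟨j * t % n, Nat.mod_lt _ hn⟩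

theorem mul_mod_mul_mod_of_modEq_one {u t : ℕ} (hut : u * t ≡ 1 [MOD n]) {i : ℕ} (hi : i < n) :
    i * u % n * t % n = i := by
  have h : i * u % n * t ≡ i [MOD n] :=
    calc i * u % n * t ≡ i * u * t [MOD n] := (Nat.mod_modEq _ _).mul_right t
      _ = i * (u * t) := mul_assoc _ _ _
      _ ≡ i * 1 [MOD n] := hut.mul_left i
      _ = i := mul_one i
  rw [h, Nat.mod_eq_of_lt hi]

theorem mul_mod_eq_iff_of_modEq_one {u t : ℕ} (hut : u * t ≡ 1 [MOD n]) {i j : ℕ}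
    (hi : i < n) (hj : j < n) : i * u % n = j ↔ j * t % n = i := by
  have htu : t * u ≡ 1 [MOD n] := by rwa [mul_comm]
  constructor
  · rintro rfl
    exact mul_mod_mul_mod_of_modEq_one hut hi
  · rintro rfl
    exact mul_mod_mul_mod_of_modEq_one htu hj

variable {t : ℕ} (ht : t.Coprime n)
include ht

theorem finMulMod_add_mod_eq_iff (i j k : Fin n) :
    ((finMulMod hn t i : ℕ) + finMulMod hn t j) % n = finMulMod hn t k ↔ (i + j : ℕ) % n = k := by
  have hsum : ((i : ℕ) * t % n + (j : ℕ) * t % n) % n = ((i : ℕ) + j) * t % n := by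
    rw [← Nat.add_mod, add_mul]
  change ((i : ℕ) * t % n + (j : ℕ) * t % n) % n = (k : ℕ) * t % n ↔ _
  rw [hsum]
  conv_rhs => rw [← Nat.mod_eq_of_lt k.isLt]
  exact ⟨Nat.ModEq.cancel_right_of_coprime ht.symm, fun h => Nat.ModEq.mul_right t h⟩

theorem finMulMod_injective : Function.Injective (finMulMod hn t) := by
  intro i j hij
  have h : (i : ℕ) * t ≡ j * t [MOD n] := congrArg Fin.val hij
  rw [Fin.ext_iff, ← Nat.mod_eq_of_lt i.isLt, ← Nat.mod_eq_of_lt j.isLt]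
  exact Nat.ModEq.cancel_right_of_coprime ht.symm h

theorem finMulMod_bijective : Function.Bijective (finMulMod hn t) :=
  (finMulMod_injective hn ht).bijective_of_finite

theorem finMulMod_eq_zero_iff (j : Fin n) : finMulMod hn t j = ⟨0, hn⟩ ↔ j = ⟨0, hn⟩ := by
  have hzero : finMulMod hn t ⟨0, hn⟩ = ⟨0, hn⟩ := by simp [finMulMod]
  conv_lhs => rw [← hzero]
  exact (finMulMod_injective hn ht).eq_iff

end FinMulMod

section QuotientAlgebra

variable {n : ℕ} (hn : 0 < n)

theorem qPhi_eq_comp_finMulMod {u t : ℕ} (hut : u * t ≡ 1 [MOD n]) (c : Fin n → M) :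
    qPhi u c = c ∘ finMulMod hn t := by
  funext j
  have hcond : ∀ i : Fin n, (i : ℕ) * u % n = j ↔ i = finMulMod hn t j := fun i => by
    rw [mul_mod_eq_iff_of_modEq_one hut i.isLt j.isLt, Fin.ext_iff, eq_comm]
    rfl
  simp only [qPhi, hcond, Finset.sum_ite_eq', Finset.mem_univ, if_true, Function.comp_apply]

variable {t : ℕ} (ht : t.Coprime n)
include ht

theorem qOne_comp_finMulMod : qOne M n ∘ finMulMod hn t = qOne M n := by
  funext j
  have h := finMulMod_eq_zero_iff hn ht j
  simp only [Fin.ext_iff] at h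
  simp only [qOne, Function.comp_apply, h]

theorem qMul_comp_finMulMod (θ : M ≃+* M) (hθ : θ ^ n = 1) (c d : Fin n → M) :
    qMul θ n c d ∘ finMulMod hn t = qMul (θ ^ t) n (c ∘ finMulMod hn t) (d ∘ finMulMod hn t) := by
  funext k
  have hbij := finMulMod_bijective hn ht
  have hpow (i : Fin n) : θ ^ (finMulMod hn t i : ℕ) = (θ ^ t) ^ (i : ℕ) := by
    rw [← pow_mul, mul_comm, pow_eq_pow_mod ((i : ℕ) * t) hθ]
    rfl
  simp only [Function.comp_apply, qMul]
  rw [← hbij.sum_comp]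
  refine Finset.sum_congr rfl fun i _ => ?_
  rw [← hbij.sum_comp]
  refine Finset.sum_congr rfl fun j _ => ?_
  rw [hpow]
  exact if_congr (finMulMod_add_mod_eq_iff hn ht i j k) rfl rfl

end QuotientAlgebra

theorem quotient_algebra_isomorphism_general {M : Type*} [Field M] (θ : M ≃+* M) (n : ℕ)
    (hn : 0 < n) (hord : orderOf θ = n)
    (t u : ℕ)
    (hgcd : Nat.gcd t n = 1) (hut : u * t % n = 1 % n) :
    (∀ c d : Fin n → M, qPhi u (c + d) = qPhi u c + qPhi u d) ∧
    (∀ c d : Fin n → M, qPhi u (qMul θ n c d) = qMul (θ ^ t) n (qPhi u c) (qPhi u d)) ∧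
    qPhi u (qOne M n) = qOne M n ∧
    (∀ a : M, θ a = a → ∀ c : Fin n → M,
      qPhi u (fun i => a * c i) = fun j => a * qPhi u c j) ∧
    Function.Bijective (qPhi u : (Fin n → M) → (Fin n → M)) ∧
    (∀ c : Fin n → M, qPhi u c = fun j : Fin n => c ⟨(j : ℕ) * t % n, Nat.mod_lt _ hn⟩) := by
  have hθ : θ ^ n = 1 := hord ▸ pow_orderOf_eq_one θ
  have hφ : ∀ c : Fin n → M, qPhi u c = c ∘ finMulMod hn t := qPhi_eq_comp_finMulMod hn hut
  have hφ_fun : (qPhi u : (Fin n → M) → (Fin n → M)) = fun c => c ∘ finMulMod hn t := funext hφ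
  refine ⟨fun c d => ?_, fun c d => ?_, ?_, fun a _ c => ?_, ?_, hφ⟩
  · simp only [hφ]; rfl
  · simp only [hφ]; exact qMul_comp_finMulMod hn hgcd θ hθ c d
  · rw [hφ]; exact qOne_comp_finMulMod hn hgcd
  · simp only [hφ]; rfl
  · rw [hφ_fun]; exact (finMulMod_bijective hn hgcd).comp_right

/-- Let `θ` be an automorphism of `M` of finite order `n` with fixed field
`K = M^θ`, and `t, u > 0` with `gcd(t, n) = 1` and `u·t ≡ 1 (mod n)`. The map
`φ : S/S(xⁿ-1) → S'/S'(yⁿ-1)` (`S = M[x;θ]`, `S' = M[y;θᵗ]`) determined by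
`φ(a·xⁱ) = a·y^{iu}` is a well-defined isomorphism of `K`-algebras (additive, multiplicative,
unital, `K`-linear and bijective), and under the identification with `Mⁿ` via coefficient
vectors it is the coordinate permutation `ρ` sending `(c₀, …, c_{n-1})` to the vector whose
`j`-th coordinate is `c_{jt mod n}`. -/
theorem quotient_algebra_isomorphism {M : Type*} [Field M] (θ : M ≃+* M) (n : ℕ)
    (hn : 0 < n) (hord : orderOf θ = n)
    (t u : ℕ) (ht : 0 < t) (hu : 0 < u)
    (hgcd : Nat.gcd t n = 1) (hut : u * t % n = 1 % n) :
    (∀ c d : Fin n → M, qPhi u (c + d) = qPhi u c + qPhi u d) ∧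
    (∀ c d : Fin n → M, qPhi u (qMul θ n c d) = qMul (θ ^ t) n (qPhi u c) (qPhi u d)) ∧
    qPhi u (qOne M n) = qOne M n ∧
    (∀ a : M, θ a = a → ∀ c : Fin n → M,
      qPhi u (fun i => a * c i) = fun j => a * qPhi u c j) ∧
    Function.Bijective (qPhi u : (Fin n → M) → (Fin n → M)) ∧
    (∀ c : Fin n → M, qPhi u c = fun j : Fin n => c ⟨(j : ℕ) * t % n, Nat.mod_lt _ hn⟩) :=
  quotient_algebra_isomorphism_general θ n hn hord t u hgcd hut
end

section
/- In the skew polynomial ring S = M[x;θ], one has ⋂_{i=0}^{n−1} S·(x − θ^i(β)) = S·(x^n − 1); equivalently, x^n − 1 = lclm(x − β, x − θ(β), …, x − θ^{n−1}(β)). -/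
/-! Skew polynomials over a field `M` twisted by a ring automorphism `θ` (`x·a = θ(a)·x`),
modeled as finitely supported functions `ℕ →₀ M` (coefficient of `xⁱ` at `i`),
with left-coefficient multiplication `(Σᵢ aᵢ xⁱ)·(Σⱼ bⱼ xʲ) = Σᵢⱼ aᵢ θⁱ(bⱼ) x^{i+j}`. -/

variable {M : Type*} [Field M]

/-- Multiplication of skew polynomials: `f * g` in `M[x;θ]`. -/
noncomputable def sMul (θ : M ≃+* M) (f g : ℕ →₀ M) : ℕ →₀ M :=
  f.sum fun i a => g.sum fun j b => Finsupp.single (i + j) (a * (θ ^ i) b)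

/-- The skew polynomial `x - γ`. -/
noncomputable def Xsub (γ : M) : ℕ →₀ M := Finsupp.single 1 1 - Finsupp.single 0 γ

/-- The skew polynomial `xⁿ - 1`. -/
noncomputable def XnSubOne (n : ℕ) : ℕ →₀ M := Finsupp.single n 1 - Finsupp.single 0 1

/-- The left ideal `S·f = {q·f : q ∈ S}` of `S = M[x;θ]`. -/
def lIdeal (θ : M ≃+* M) (f : ℕ →₀ M) : Set (ℕ →₀ M) := {h | ∃ q, h = sMul θ q f}

/-- `g` right-divides `f` in `M[x;θ]`, i.e. `f ∈ S·g`. -/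
def rdvd (θ : M ≃+* M) (g f : ℕ →₀ M) : Prop := f ∈ lIdeal θ g

/-- The fixed subfield of an automorphism. -/
noncomputable def fixedSubfield (φ : M ≃+* M) : Subfield M where
  carrier := {a | φ a = a}
  zero_mem' := map_zero φ
  one_mem' := map_one φ
  add_mem' := by intro a b ha hb; simp only [Set.mem_setOf_eq, map_add] at *; rw [ha, hb]
  mul_mem' := by intro a b ha hb; simp only [Set.mem_setOf_eq, map_mul] at *; rw [ha, hb]
  neg_mem' := by intro a ha; simp only [Set.mem_setOf_eq, map_neg] at *; rw [ha]
  inv_mem' := by intro a ha; simp only [Set.mem_setOf_eq, map_inv₀] at *; rw [ha]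

/-- A skew polynomial lies in the subring `R` of polynomials whose coefficients are fixed
by the automorphism `φ` (for `φ = θ^μ = π`, this is `R = L[x;σ]` with `L = M^π`). -/
def inR (φ : M ≃+* M) (f : ℕ →₀ M) : Prop := ∀ j, φ (f j) = f j

/-- The polynomial of degree `< n` with coefficient vector `c`. -/
noncomputable def vecPoly {n : ℕ} (c : Fin n → M) : ℕ →₀ M :=
  ∑ j : Fin n, Finsupp.single (j : ℕ) (c j)

/-- Hamming weight of a vector. -/
noncomputable def hWt {n : ℕ} (c : Fin n → M) : ℕ := Set.ncard {j : Fin n | c j ≠ 0}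

/-- `α` generates a normal basis `{α, θ(α), …, θ^{n-1}(α)}` of `M` over `K = M^θ`. -/
def NormalBasis (θ : M ≃+* M) (n : ℕ) (α : M) : Prop :=
  LinearIndependent (fixedSubfield θ) (fun i : Fin n => (θ ^ (i : ℕ)) α) ∧
    Submodule.span (fixedSubfield θ) (Set.range fun i : Fin n => (θ ^ (i : ℕ)) α) = ⊤

/-- `f` is monic of degree `d`. -/
def IsMonicAt (f : ℕ →₀ M) (d : ℕ) : Prop := f d = 1 ∧ ∀ j, d < j → f j = 0

/-- `f` is monic. -/
def IsMonic (f : ℕ →₀ M) : Prop := ∃ d, IsMonicAt f d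

/-- Coefficientwise application of an automorphism to a skew polynomial (`f ↦ f^φ`). -/
noncomputable def pmap (φ : M ≃+* M) (f : ℕ →₀ M) : ℕ →₀ M :=
  Finsupp.mapRange φ (map_zero φ) f


/-! Right division by `x - γ` leaves the remainder `f(γ) = ∑ₖ fₖ Nₖ(γ)`, where
`Nₖ(γ) = γ θ(γ) ⋯ θ^{k-1}(γ)`, so `S·(x - γ)` is the kernel of this evaluation. For
`γ = θⁱ(β)` the norms telescope to `Nₖ = θⁱ(α)⁻¹ θ^{i+k}(α)`, which is `n`-periodic in `k`;
hence every left multiple of `xⁿ - 1` evaluates to zero. Conversely, the remainder `r` of `f`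
modulo `xⁿ - 1` then satisfies `∑ₖ rₖ θⁱ(θᵏ α) = 0` for all `i < n`, and the matrix
`(θⁱ(θᵏ α))ᵢₖ` is invertible by Dedekind's independence of characters, since the `θᵏ α` span
`M` over `K`; so `r = 0`. -/

section SkewPolynomial

variable (θ : M ≃+* M)

lemma sMul_zero_left (g : ℕ →₀ M) : sMul θ 0 g = 0 := Finsupp.sum_zero_index

lemma sMul_add_left (f f' g : ℕ →₀ M) :
    sMul θ (f + f') g = sMul θ f g + sMul θ f' g := by
  unfold sMul
  refine Finsupp.sum_add_index' (fun _ => by simp) (fun i a a' => ?_)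
  rw [← Finsupp.sum_add]
  congr 1
  ext j b
  rw [add_mul, Finsupp.single_add]

lemma sMul_single_binomial (j d : ℕ) (a c : M) :
    sMul θ (Finsupp.single j a) (Finsupp.single d 1 - Finsupp.single 0 c)
      = Finsupp.single (j + d) a - Finsupp.single j (a * (θ ^ j) c) := by
  unfold sMul
  rw [Finsupp.sum_single_index (by simp),
    Finsupp.sum_sub_index (fun _ _ _ => by rw [map_sub, mul_sub, Finsupp.single_sub]),
    Finsupp.sum_single_index (by simp), Finsupp.sum_single_index (by simp), map_one, mul_one,
    add_zero]

lemma exists_single_eq_sMul_binomial_add {d : ℕ} (hd : 0 < d) (c : M) (i : ℕ) (a : M) :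
    ∃ q r : ℕ →₀ M, Finsupp.single i a = sMul θ q (Finsupp.single d 1 - Finsupp.single 0 c) + r ∧
      ∀ j, d ≤ j → r j = 0 := by
  induction i using Nat.strong_induction_on generalizing a with
  | _ i ih =>
    by_cases hi : i < d
    · exact ⟨0, Finsupp.single i a, by rw [sMul_zero_left, zero_add],
        fun j hj => Finsupp.single_eq_of_ne (by omega)⟩
    obtain ⟨q, r, hqr, hr⟩ := ih (i - d) (by omega) (a * (θ ^ (i - d)) c)
    refine ⟨Finsupp.single (i - d) a + q, r, ?_, hr⟩
    rw [sMul_add_left, sMul_single_binomial, Nat.sub_add_cancel (by omega), add_assoc, ← hqr,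
      sub_add_cancel]

lemma exists_eq_sMul_binomial_add {d : ℕ} (hd : 0 < d) (c : M) (f : ℕ →₀ M) :
    ∃ q r : ℕ →₀ M, f = sMul θ q (Finsupp.single d 1 - Finsupp.single 0 c) + r ∧
      ∀ j, d ≤ j → r j = 0 := by
  induction f using Finsupp.induction_linear with
  | zero => exact ⟨0, 0, by rw [sMul_zero_left, add_zero], fun _ _ => rfl⟩
  | add f g hf hg =>
    obtain ⟨q, r, rfl, hr⟩ := hf
    obtain ⟨q', r', rfl, hr'⟩ := hg
    refine ⟨q + q', r + r', by rw [sMul_add_left]; abel, fun j hj => ?_⟩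
    rw [Finsupp.add_apply, hr j hj, hr' j hj, add_zero]
  | single i a => exact exists_single_eq_sMul_binomial_add θ hd c i a

noncomputable def skewNorm (γ : M) (k : ℕ) : M := ∏ m ∈ Finset.range k, (θ ^ m) γ

/-- The Lam–Leroy evaluation `f(γ)`: the remainder of `f` on right division by `x - γ`. -/
noncomputable def skewEval (γ : M) : (ℕ →₀ M) →ₗ[M] M :=
  Finsupp.linearCombination M (skewNorm θ γ)

lemma skewNorm_succ (γ : M) (k : ℕ) : skewNorm θ γ (k + 1) = skewNorm θ γ k * (θ ^ k) γ :=
  Finset.prod_range_succ _ _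

lemma skewEval_single (γ : M) (k : ℕ) (a : M) :
    skewEval θ γ (Finsupp.single k a) = a * skewNorm θ γ k := by
  rw [skewEval, Finsupp.linearCombination_single, smul_eq_mul]

lemma skewEval_eq_sum_fin (γ : M) {n : ℕ} {f : ℕ →₀ M} (hf : ∀ j, n ≤ j → f j = 0) :
    skewEval θ γ f = ∑ k : Fin n, f k * skewNorm θ γ k := by
  have hsupp : f.support ⊆ Finset.range n := fun j hj => by
    by_contra hjn
    exact Finsupp.mem_support_iff.mp hj (hf j (by simpa using hjn))
  rw [skewEval, Finsupp.linearCombination_apply,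
    Finsupp.sum_of_support_subset f hsupp (fun i a => a • skewNorm θ γ i) fun _ _ => zero_smul _ _]
  exact Finset.sum_range fun k => f k * skewNorm θ γ k

lemma skewEval_sMul_binomial {d : ℕ} {c γ : M}
    (h : ∀ k, skewNorm θ γ (k + d) = skewNorm θ γ k * (θ ^ k) c) (q : ℕ →₀ M) :
    skewEval θ γ (sMul θ q (Finsupp.single d 1 - Finsupp.single 0 c)) = 0 := by
  induction q using Finsupp.induction_linear with
  | zero => rw [sMul_zero_left, map_zero]
  | add q q' hq hq' => rw [sMul_add_left, map_add, hq, hq', add_zero]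
  | single j a =>
    rw [sMul_single_binomial, map_sub, skewEval_single, skewEval_single, h, sub_eq_zero, mul_assoc,
      mul_comm ((θ ^ j) c)]

lemma mem_lIdeal_Xsub_iff (γ : M) (f : ℕ →₀ M) :
    f ∈ lIdeal θ (Xsub γ) ↔ skewEval θ γ f = 0 := by
  constructor
  · rintro ⟨q, rfl⟩
    exact skewEval_sMul_binomial θ (skewNorm_succ θ γ) q
  · intro hf
    obtain ⟨q, r, rfl, hr⟩ := exists_eq_sMul_binomial_add θ one_pos γ f
    rw [map_add, skewEval_sMul_binomial θ (skewNorm_succ θ γ), zero_add,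
      skewEval_eq_sum_fin θ γ hr] at hf
    have hr0 : r = 0 := by
      ext (_ | j)
      · simpa [skewNorm] using hf
      · exact hr _ (by omega)
    exact ⟨q, by rw [hr0, add_zero]; rfl⟩

end SkewPolynomial

section NormalBasis

variable (θ : M ≃+* M)

lemma pow_apply_of_mem_fixedSubfield {a : M} (ha : a ∈ fixedSubfield θ) (i : ℕ) :
    (θ ^ i) a = a := by
  induction i with
  | zero => rfl
  | succ i ih => rw [pow_succ, RingAut.mul_apply, show θ a = a from ha, ih]

lemma linearIndependent_coe_pow {n : ℕ} (hord : orderOf θ = n) :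
    LinearIndependent M fun i : Fin n => ⇑(θ ^ (i : ℕ)) := by
  have hinj : Function.Injective fun i : Fin n => ((θ ^ (i : ℕ) : M ≃+* M) : M →* M) := by
    intro i j hij
    have hpow : θ ^ (i : ℕ) = θ ^ (j : ℕ) := RingEquiv.ext fun x => DFunLike.congr_fun hij x
    exact Fin.ext <| pow_injOn_Iio_orderOf (hord ▸ i.2 : (i : ℕ) < orderOf θ)
      (hord ▸ j.2 : (j : ℕ) < orderOf θ) hpow
  exact (linearIndependent_monoidHom M M).comp _ hinj

/-- A vanishing combination `∑ dᵢ θⁱ` of the rows is `K`-linear and vanishes on the spanning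
family `b`, so it is zero, and Dedekind's lemma gives `d = 0`. -/
lemma isUnit_matrix_pow_apply {n : ℕ} (hord : orderOf θ = n) {b : Fin n → M}
    (hb : Submodule.span (fixedSubfield θ) (Set.range b) = ⊤) :
    IsUnit (Matrix.of fun i k : Fin n => (θ ^ (i : ℕ)) (b k)) := by
  rw [← Matrix.linearIndependent_rows_iff_isUnit, Fintype.linearIndependent_iff]
  intro d hd
  let φ : M →ₗ[fixedSubfield θ] M :=
    { toFun := fun m => ∑ i, d i * (θ ^ (i : ℕ)) m
      map_add' := fun x y => by simp only [map_add, mul_add, Finset.sum_add_distrib]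
      map_smul' := fun a m => by
        simp only [Subfield.smul_def, map_mul, pow_apply_of_mem_fixedSubfield θ a.2,
          RingHom.id_apply, smul_eq_mul, Finset.mul_sum]
        exact Finset.sum_congr rfl fun i _ => by ring }
  have hφ : φ = 0 := LinearMap.ext_on_range hb fun k => by
    simpa [φ, Matrix.row, Finset.sum_apply, -RingAut.coe_pow] using congrFun hd k
  refine Fintype.linearIndependent_iff.mp (linearIndependent_coe_pow θ hord) d ?_
  ext m
  simpa [φ, -RingAut.coe_pow] using LinearMap.congr_fun hφ m

lemma pow_apply_inv_mul_apply (i : ℕ) (α : M) :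
    (θ ^ i) (α⁻¹ * θ α) = ((θ ^ i) α)⁻¹ * θ ((θ ^ i) α) := by
  rw [map_mul, map_inv₀, ← RingAut.mul_apply, ← RingAut.mul_apply, ← pow_succ, ← pow_succ']

lemma skewNorm_inv_mul_apply {α : M} (hα : α ≠ 0) (k : ℕ) :
    skewNorm θ (α⁻¹ * θ α) k = α⁻¹ * (θ ^ k) α := by
  induction k with
  | zero => simp [skewNorm, hα]
  | succ k ih =>
    have hk : (θ ^ k) α ≠ 0 := (map_ne_zero _).mpr hα
    rw [skewNorm_succ, ih, pow_apply_inv_mul_apply, mul_assoc, ← mul_assoc ((θ ^ k) α),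
      mul_inv_cancel₀ hk, one_mul, ← RingAut.mul_apply, ← pow_succ']

lemma skewNorm_inv_mul_apply_add {α : M} (hα : α ≠ 0) {n : ℕ} (hθn : θ ^ n = 1) (k : ℕ) :
    skewNorm θ (α⁻¹ * θ α) (k + n) = skewNorm θ (α⁻¹ * θ α) k * (θ ^ k) 1 := by
  rw [skewNorm_inv_mul_apply θ hα, skewNorm_inv_mul_apply θ hα, pow_add, hθn, mul_one, map_one,
    mul_one]

lemma eq_zero_of_skewEval_pow_apply_eq_zero {n : ℕ} (hord : orderOf θ = n) {α : M} (hα : α ≠ 0)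
    (hspan : Submodule.span (fixedSubfield θ) (Set.range fun k : Fin n => (θ ^ (k : ℕ)) α) = ⊤)
    {r : ℕ →₀ M} (hr : ∀ j, n ≤ j → r j = 0)
    (h : ∀ i < n, skewEval θ ((θ ^ i) (α⁻¹ * θ α)) r = 0) : r = 0 := by
  have hc : (fun k : Fin n => r k) = 0 := by
    refine Matrix.mulVec_injective_iff_isUnit.mpr (isUnit_matrix_pow_apply θ hord hspan) ?_
    ext i
    rw [Matrix.mulVec_zero, Pi.zero_apply]
    have hαi : (θ ^ (i : ℕ)) α ≠ 0 := (map_ne_zero _).mpr hα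
    have hi := h i i.2
    rw [pow_apply_inv_mul_apply, skewEval_eq_sum_fin θ _ hr] at hi
    simp only [skewNorm_inv_mul_apply θ hαi] at hi
    calc ∑ k : Fin n, (θ ^ (i : ℕ)) ((θ ^ (k : ℕ)) α) * r k
        = (θ ^ (i : ℕ)) α *
            ∑ k : Fin n, r k * (((θ ^ (i : ℕ)) α)⁻¹ * (θ ^ (k : ℕ)) ((θ ^ (i : ℕ)) α)) := by
          rw [Finset.mul_sum]
          refine Finset.sum_congr rfl fun k _ => ?_
          rw [← RingAut.mul_apply, ← RingAut.mul_apply, pow_mul_comm]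
          field_simp
      _ = 0 := by rw [hi, mul_zero]
  ext j
  by_cases hj : j < n
  · exact congrFun hc ⟨j, hj⟩
  · exact hr j (not_lt.mp hj)

end NormalBasis

/-- Let `θ` be an automorphism of `M` of finite order `n` with `K = M^θ`,
`α` generating a normal basis of `M/K`, and `β = α⁻¹θ(α)`. Then in `S = M[x;θ]`,
`⋂_{i=0}^{n-1} S·(x - θⁱ(β)) = S·(xⁿ - 1)`; equivalently
`xⁿ - 1 = lclm(x - β, x - θ(β), …, x - θ^{n-1}(β))`. -/
theorem xn_sub_one_eq_lclm {M : Type*} [Field M] (θ : M ≃+* M) (n : ℕ) (hn : 0 < n)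
    (hord : orderOf θ = n) (α : M) (hα : NormalBasis θ n α) (β : M) (hβ : β = α⁻¹ * θ α) :
    (⋂ i ∈ Finset.range n, lIdeal θ (Xsub ((θ ^ i) β))) = lIdeal θ (XnSubOne n) := by
  subst hβ
  have hα0 : α ≠ 0 := by simpa using hα.1.ne_zero ⟨0, hn⟩
  have hperiodic : ∀ i k, skewNorm θ ((θ ^ i) (α⁻¹ * θ α)) (k + n)
      = skewNorm θ ((θ ^ i) (α⁻¹ * θ α)) k * (θ ^ k) 1 := fun i => by
    rw [pow_apply_inv_mul_apply]
    exact skewNorm_inv_mul_apply_add θ ((map_ne_zero _).mpr hα0) (hord ▸ pow_orderOf_eq_one θ)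
  ext f
  simp only [Set.mem_iInter, Finset.mem_range, mem_lIdeal_Xsub_iff]
  constructor
  · intro hf
    obtain ⟨q, r, rfl, hr⟩ := exists_eq_sMul_binomial_add θ hn 1 f
    have hr0 : r = 0 := eq_zero_of_skewEval_pow_apply_eq_zero θ hord hα0 hα.2 hr fun i hi => by
      simpa only [map_add, skewEval_sMul_binomial θ (hperiodic i) q, zero_add] using hf i hi
    exact ⟨q, by rw [hr0, add_zero]; rfl⟩
  · rintro ⟨q, rfl⟩ i -
    exact skewEval_sMul_binomial θ (hperiodic i) q
end

section
/- Let q be a prime power, let μ, s, h be positive integers with gcd(h, μ) = 1, let a be the product of the distinct primes dividing s that do not divide h, and set k = aμ + h. Then gcd(k, μs) = 1. Consequently, the automorphism θ : x ↦ x^{q^k} of the finite field F_{q^{μs}} has order μs and fixed field F_q, and its restriction to the subfield F_{q^μ} is the automorphism σ : x ↦ x^{q^h}, which has order μ and fixed field F_q; that is, θ is an extension of degree s of σ. -/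
/-!
If `|F| = q ^ n`, the solutions of `x ^ q ^ j = x` in `F` are `0` and the kernel of
`u ↦ u ^ (q ^ j - 1)` on the cyclic group `Fˣ` of order `q ^ n - 1`; since
`gcd (q ^ n - 1) (q ^ j - 1) = q ^ gcd n j - 1`, there are exactly `q ^ gcd n j` of them.
Comparing these counts gives the order of `θ`, its fixed field and the order of its restriction
`x ↦ x ^ q ^ h` to `F_{q^μ}`, once `gcd (k, μ s) = 1`; the latter holds because a prime dividing
`s` divides exactly one of `a μ` and `h`.
-/

open Function

theorem Nat.Prime.dvd_prod_primeFactors_sdiff_iff {p s h : ℕ} (hp : p.Prime) (hs : s ≠ 0)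
    (hh : h ≠ 0) : p ∣ ∏ r ∈ s.primeFactors \ h.primeFactors, r ↔ p ∣ s ∧ ¬p ∣ h := by
  have hprimes : ∀ r ∈ s.primeFactors \ h.primeFactors, r.Prime := fun r hr =>
    Nat.prime_of_mem_primeFactors (Finset.mem_sdiff.mp hr).1
  have hprod : ∏ r ∈ s.primeFactors \ h.primeFactors, r ≠ 0 :=
    Finset.prod_ne_zero_iff.mpr fun r hr => (hprimes r hr).ne_zero
  rw [← (Nat.mem_primeFactors_of_ne_zero hprod).trans (and_iff_right hp),
    Nat.primeFactors_prod hprimes]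
  simp [hp, hs, hh]

theorem Nat.coprime_prod_primeFactors_sdiff_mul_add {μ s h : ℕ} (hs : s ≠ 0) (hh : h ≠ 0)
    (hhμ : h.Coprime μ) :
    ((∏ p ∈ s.primeFactors \ h.primeFactors, p) * μ + h).Coprime (μ * s) := by
  set a := ∏ p ∈ s.primeFactors \ h.primeFactors, p
  refine Nat.Coprime.mul_right ?_ (Nat.coprime_of_dvd fun p hp hpk hps => ?_)
  · rwa [add_comm, Nat.coprime_add_mul_right_left]
  have hpa := hp.dvd_prod_primeFactors_sdiff_iff hs hh
  by_cases hph : p ∣ h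
  · have hpμ : ¬p ∣ μ := fun hpμ => hp.one_lt.ne' (Nat.eq_one_of_dvd_coprimes hhμ hph hpμ)
    have hpaμ : p ∣ a * μ := (Nat.dvd_add_left hph).mp hpk
    rcases hp.dvd_mul.mp hpaμ with hpa' | hpμ'
    · exact (hpa.mp hpa').2 hph
    · exact hpμ hpμ'
  · exact hph ((Nat.dvd_add_right (Dvd.dvd.mul_right (hpa.mpr ⟨hps, hph⟩) μ)).mp hpk)

theorem isPeriodicPt_pow_iff {M : Type*} [Monoid M] {q j : ℕ} {x : M} :
    IsPeriodicPt (· ^ q) j x ↔ x ^ q ^ j = x := by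
  rw [IsPeriodicPt, IsFixedPt, pow_iterate]

theorem pow_pow_gcd_eq_self_iff {M : Type*} [Monoid M] {q m n : ℕ} {x : M} :
    x ^ q ^ m.gcd n = x ↔ x ^ q ^ m = x ∧ x ^ q ^ n = x := by
  simp only [← isPeriodicPt_pow_iff]
  refine ⟨fun hx => ⟨?_, ?_⟩, fun hx => hx.1.gcd hx.2⟩
  · simpa [Nat.mul_div_cancel' (Nat.gcd_dvd_left m n)] using hx.mul_const (m / m.gcd n)
  · simpa [Nat.mul_div_cancel' (Nat.gcd_dvd_right m n)] using hx.mul_const (n / m.gcd n)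

theorem pow_pow_mul_eq_self {M : Type*} [Monoid M] {q m : ℕ} {x : M} (hx : x ^ q ^ m = x)
    (t : ℕ) : x ^ q ^ (m * t) = x :=
  isPeriodicPt_pow_iff.mp ((isPeriodicPt_pow_iff.mpr hx).mul_const t)

namespace FiniteField

variable {F : Type*} [Field F] [Fintype F]

theorem one_lt_of_card_eq_pow {q n : ℕ} (hF : Fintype.card F = q ^ n) : 1 < q ∧ n ≠ 0 := by
  have hlt : 1 < q ^ n := hF ▸ Fintype.one_lt_card
  have hn : n ≠ 0 := by rintro rfl; simp at hlt
  exact ⟨(Nat.one_lt_pow_iff hn).mp hlt, hn⟩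

theorem card_pow_eq_self {m : ℕ} (hm : 0 < m) :
    Nat.card {x : F // x ^ m = x} = (Fintype.card F - 1).gcd (m - 1) + 1 := by
  have hset : {x : F | x ^ m = x} =
      insert 0 ((↑) '' ((powMonoidHom (m - 1) : Fˣ →* Fˣ).ker : Set Fˣ)) := by
    ext x
    rcases eq_or_ne x 0 with rfl | hx
    · simp [zero_pow hm.ne']
    · have hpow : x ^ m = x ↔ x ^ (m - 1) = 1 := by
        conv_lhs => rw [← Nat.sub_add_cancel hm, pow_succ]
        exact mul_eq_right₀ hx
      simp only [Set.mem_ofPred_eq, hpow, Set.mem_insert_iff, hx, false_or, Set.mem_image,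
        SetLike.mem_coe, MonoidHom.mem_ker, powMonoidHom_apply]
      exact ⟨fun h1 => ⟨Units.mk0 x hx, Units.ext h1, rfl⟩,
        fun ⟨u, hu, hux⟩ => hux ▸ by simpa using congrArg Units.val hu⟩
  change Nat.card {x : F | x ^ m = x} = _
  rw [hset, Nat.card_coe_set_eq, Set.ncard_insert_of_notMem (by simp),
    Set.ncard_image_of_injective _ Units.val_injective, ← Nat.card_coe_set_eq,
    SetLike.coe_sort_coe, IsCyclic.card_powMonoidHom_ker, Nat.card_units,
    Nat.card_eq_fintype_card]

theorem card_pow_pow_eq_self {q n : ℕ} (hF : Fintype.card F = q ^ n) (j : ℕ) :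
    Nat.card {x : F // x ^ q ^ j = x} = q ^ n.gcd j := by
  have hq : 0 < q := (one_lt_of_card_eq_pow hF).1.le
  rw [card_pow_eq_self (Nat.pow_pos hq), hF, Nat.pow_sub_one_gcd_pow_sub_one,
    Nat.sub_add_cancel (Nat.one_le_pow _ _ hq)]

theorem forall_pow_pow_eq_self_imp_iff_dvd {q n e : ℕ} (hF : Fintype.card F = q ^ n)
    (he : e ∣ n) (j : ℕ) : (∀ x : F, x ^ q ^ e = x → x ^ q ^ j = x) ↔ e ∣ j := by
  refine ⟨fun H => ?_, fun ⟨t, ht⟩ x hx => ht ▸ pow_pow_mul_eq_self hx t⟩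
  have hfix : ∀ x : F, x ^ q ^ e.gcd j = x ↔ x ^ q ^ e = x := fun x =>
    pow_pow_gcd_eq_self_iff.trans ⟨And.left, fun hx => ⟨hx, H x hx⟩⟩
  have hcard := Nat.card_congr (Equiv.subtypeEquivRight hfix)
  rw [card_pow_pow_eq_self hF, card_pow_pow_eq_self hF, Nat.gcd_eq_right he,
    Nat.gcd_eq_right ((Nat.gcd_dvd_left e j).trans he)] at hcard
  exact Nat.gcd_eq_left_iff_dvd.mp (Nat.pow_right_injective (one_lt_of_card_eq_pow hF).1 hcard)

theorem forall_pow_pow_eq_self_iff_dvd {q n : ℕ} (hF : Fintype.card F = q ^ n) (j : ℕ) :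
    (∀ x : F, x ^ q ^ j = x) ↔ n ∣ j := by
  rw [← forall_pow_pow_eq_self_imp_iff_dvd hF dvd_rfl]
  have hall : ∀ x : F, x ^ q ^ n = x := fun x => hF ▸ FiniteField.pow_card x
  exact ⟨fun H x _ => H x, fun H x => H x (hall x)⟩

end FiniteField

theorem RingEquiv.orderOf_eq_of_apply_eq_pow_pow {F : Type*} [Field F] [Fintype F]
    (θ : F ≃+* F) {q n k : ℕ} (hF : Fintype.card F = q ^ n) (hkn : k.Coprime n)
    (hθ : ∀ x, θ x = x ^ q ^ k) : orderOf θ = n := by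
  have hpow : ∀ j, θ ^ j = 1 ↔ n ∣ j := fun j => by
    have hθj : ∀ x, (θ ^ j) x = x ^ q ^ (k * j) := fun x => by
      rw [RingAut.coe_pow, show (θ : F → F) = (· ^ q ^ k) from funext hθ, pow_iterate, pow_mul]
    rw [RingEquiv.ext_iff]
    simp only [hθj, RingAut.one_apply]
    rw [FiniteField.forall_pow_pow_eq_self_iff_dvd hF]
    exact hkn.symm.dvd_mul_left
  exact Nat.dvd_antisymm (orderOf_dvd_of_pow_eq_one ((hpow n).mpr dvd_rfl))
    ((hpow _).mp (pow_orderOf_eq_one θ))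

theorem frobenius_extension_of_degree_s_general (q μ s h : ℕ)
    (hh : 0 < h) (hgcdhμ : Nat.gcd h μ = 1)
    (a : ℕ) (ha : a = ∏ p ∈ s.primeFactors \ h.primeFactors, p)
    (k : ℕ) (hk : k = a * μ + h)
    (F : Type*) [Field F] [Fintype F] (hF : Fintype.card F = q ^ (μ * s))
    (θ : F ≃+* F) (hθ : ∀ x : F, θ x = x ^ q ^ k) :
    Nat.gcd k (μ * s) = 1 ∧
    orderOf θ = μ * s ∧
    Nat.card {x : F // θ x = x} = q ∧
    (∀ x : F, x ^ q ^ μ = x → θ x = x ^ q ^ h) ∧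
    (∀ m : ℕ, 0 < m → ((∀ x : F, x ^ q ^ μ = x → x ^ q ^ (h * m) = x) ↔ μ ∣ m)) ∧
    Nat.card {x : F // x ^ q ^ μ = x ∧ x ^ q ^ h = x} = q := by
  have hs : s ≠ 0 := right_ne_zero_of_mul (FiniteField.one_lt_of_card_eq_pow hF).2
  have hks : k.Coprime (μ * s) := by
    rw [hk, ha]
    exact Nat.coprime_prod_primeFactors_sdiff_mul_add hs hh.ne' hgcdhμ
  refine ⟨hks, θ.orderOf_eq_of_apply_eq_pow_pow hF hks hθ, ?_, fun x hx => ?_,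
    fun m _ => ?_, ?_⟩
  · rw [Nat.card_congr (Equiv.subtypeEquivRight fun x => by rw [hθ]),
      FiniteField.card_pow_pow_eq_self hF, Nat.gcd_comm, hks, pow_one]
  · rw [hθ, hk, mul_comm, pow_add, pow_mul, pow_pow_mul_eq_self hx]
  · rw [FiniteField.forall_pow_pow_eq_self_imp_iff_dvd hF (Dvd.intro s rfl)]
    exact Nat.Coprime.dvd_mul_left (Nat.Coprime.symm hgcdhμ)
  · rw [Nat.card_congr (Equiv.subtypeEquivRight fun x => pow_pow_gcd_eq_self_iff.symm),
      FiniteField.card_pow_pow_eq_self hF, Nat.gcd_comm μ, hgcdhμ, Nat.gcd_one_right, pow_one]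

/-- Let `q` be a prime power, `μ, s, h` positive integers with
`gcd(h, μ) = 1`, let `a` be the product of the distinct primes dividing `s` that do not
divide `h`, and set `k = a·μ + h`. Then `gcd(k, μ·s) = 1`. Consequently, if `F` is the finite
field with `q^{μs}` elements, the automorphism `θ : x ↦ x^{q^k}` of `F` has order `μ·s` and
fixed field `F_q`, and its restriction to the subfield `F_{q^μ} = {x : x^{q^μ} = x}` is the
automorphism `σ : x ↦ x^{q^h}`, which has order `μ` and fixed field `F_q`; that is, `θ` is an
extension of degree `s` of `σ`. -/
theorem frobenius_extension_of_degree_s (q μ s h : ℕ) (hq : IsPrimePow q)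
    (hμ : 0 < μ) (hs : 0 < s) (hh : 0 < h) (hgcdhμ : Nat.gcd h μ = 1)
    (a : ℕ) (ha : a = ∏ p ∈ s.primeFactors \ h.primeFactors, p)
    (k : ℕ) (hk : k = a * μ + h)
    (F : Type*) [Field F] [Fintype F] (hF : Fintype.card F = q ^ (μ * s))
    (θ : F ≃+* F) (hθ : ∀ x : F, θ x = x ^ q ^ k) :
    Nat.gcd k (μ * s) = 1 ∧
    orderOf θ = μ * s ∧
    Nat.card {x : F // θ x = x} = q ∧
    (∀ x : F, x ^ q ^ μ = x → θ x = x ^ q ^ h) ∧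
    (∀ m : ℕ, 0 < m → ((∀ x : F, x ^ q ^ μ = x → x ^ q ^ (h * m) = x) ↔ μ ∣ m)) ∧
    Nat.card {x : F // x ^ q ^ μ = x ∧ x ^ q ^ h = x} = q :=
  frobenius_extension_of_degree_s_general q μ s h hh hgcdhμ a ha k hk F hF θ hθ
end
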